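/- Let m and n be positive multiples of 3. Then the domination number of the m×n king graph K_{m×n} is γ(K_{m×n}) = (m/3)·(n/3), and K_{m×n} has exactly one dominating set of this minimum size, namely the set of the (m/3)(n/3) center vertices of the 3×3 blocks tiling the board (the vertices (i,j) with i ≡ 2 (mod 3) and j ≡ 2 (mod 3)). -/

import Mathlib

open scoped Classical

/-- `S` is a dominating set of `G`: every vertex is in `S` or adjacent to a vertex of `S`. -/
def IsDominating {V : Type*} (G : SimpleGraph V) (S : Finset V) : Prop :=
  ∀ v : V, v ∈ S ∨ ∃ u ∈ S, G.Adj u v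

/-- The m×n king graph `P_m ⊠ P_n` (strong product of paths): vertices are pairs `(i, j)`
with `i : Fin m`, `j : Fin n`; two distinct vertices are adjacent iff their coordinates
differ by at most 1 in each component. -/
def kingGraph (m n : ℕ) : SimpleGraph (Fin m × Fin n) where
  Adj v w := v ≠ w ∧
    ((v.1 : ℕ) ≤ (w.1 : ℕ) + 1 ∧ (w.1 : ℕ) ≤ (v.1 : ℕ) + 1) ∧
    ((v.2 : ℕ) ≤ (w.2 : ℕ) + 1 ∧ (w.2 : ℕ) ≤ (v.2 : ℕ) + 1)
  symm := by
    constructor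
    intro v w h
    exact ⟨h.1.symm, ⟨h.2.1.2, h.2.1.1⟩, ⟨h.2.2.2, h.2.2.1⟩⟩
  loopless := by
    constructor
    intro v h
    exact h.1 rfl

/-!
Tile the board by 3×3 blocks. The centre of a block is dominated only from inside its block,
so a dominating set meets all `(m/3)(n/3)` blocks, and the block centres form a dominating set
of that size. If a dominating set `S` has exactly that size, it meets every block exactly once.
Were some `s ∈ S` in the top row `3a` of its block, the vertex two rows below `s`, in the
centre column of that block, could then only be dominated from the top row `3a + 3` of the
next block down; taking `s` as low as possible gives a contradiction. Reflecting and
transposing the board rules out the other non-central rows and columns.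
-/

theorem IsDominating.map_iso {V W : Type*} {G : SimpleGraph V} {G' : SimpleGraph W}
    (e : G ≃g G') {S : Finset V} (hS : IsDominating G S) :
    IsDominating G' (S.map e.toEquiv.toEmbedding) := by
  intro w
  rcases hS (e.symm w) with h | ⟨u, hu, huw⟩
  · exact .inl (Finset.mem_map_equiv.2 h)
  · refine .inr ⟨e u, Finset.mem_map_of_mem _ hu, ?_⟩
    simpa using e.map_adj_iff.2 huw

namespace kingGraph

variable {m n : ℕ}

theorem isDominating_iff {S : Finset (Fin m × Fin n)} :
    IsDominating (kingGraph m n) S ↔ ∀ v : Fin m × Fin n, ∃ u ∈ S,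
      ((u.1 : ℕ) ≤ v.1 + 1 ∧ (v.1 : ℕ) ≤ u.1 + 1) ∧
        ((u.2 : ℕ) ≤ v.2 + 1 ∧ (v.2 : ℕ) ≤ u.2 + 1) := by
  refine forall_congr' fun v => ⟨?_, fun ⟨u, hu, hnear⟩ => ?_⟩
  · rintro (hv | ⟨u, hu, -, hnear⟩)
    · exact ⟨v, hv, by omega⟩
    · exact ⟨u, hu, hnear⟩
  · by_cases huv : u = v
    · exact .inl (huv ▸ hu)
    · exact .inr ⟨u, hu, huv, hnear⟩

def reflectFst : kingGraph m n ≃g kingGraph m n where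
  toEquiv := Fin.revPerm.prodCongr (Equiv.refl _)
  map_rel_iff' {v w} := by
    obtain ⟨⟨i, hi⟩, j⟩ := v
    obtain ⟨⟨k, hk⟩, l⟩ := w
    simp only [kingGraph, Equiv.prodCongr_apply, Fin.revPerm_apply, Equiv.coe_refl,
      Prod.map_apply, id_eq, ne_eq, Prod.ext_iff, Fin.rev_inj, Fin.val_rev]
    omega

def transpose : kingGraph m n ≃g kingGraph n m where
  toEquiv := Equiv.prodComm _ _
  map_rel_iff' {v w} := by
    simp only [kingGraph, Equiv.prodComm_apply, Prod.fst_swap, Prod.snd_swap, ne_eq,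
      Prod.swap_inj]
    tauto

def block (v : Fin m × Fin n) : ℕ × ℕ := ((v.1 : ℕ) / 3, (v.2 : ℕ) / 3)

theorem range_product_subset_image_block {S : Finset (Fin m × Fin n)}
    (hS : IsDominating (kingGraph m n) S) :
    Finset.range (m / 3) ×ˢ Finset.range (n / 3) ⊆ S.image block := by
  intro ⟨a, b⟩ hab
  simp only [Finset.mem_product, Finset.mem_range] at hab
  obtain ⟨u, hu, hnear⟩ :=
    isDominating_iff.1 hS (⟨3 * a + 1, by omega⟩, ⟨3 * b + 1, by omega⟩)
  dsimp only at hnear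
  exact Finset.mem_image.2
    ⟨u, hu, Prod.ext (by simp only [block]; omega) (by simp only [block]; omega)⟩

theorem card_le_of_isDominating {S : Finset (Fin m × Fin n)}
    (hS : IsDominating (kingGraph m n) S) : m / 3 * (n / 3) ≤ S.card :=
  calc m / 3 * (n / 3) = (Finset.range (m / 3) ×ˢ Finset.range (n / 3)).card := by simp
    _ ≤ (S.image block).card := Finset.card_le_card (range_product_subset_image_block hS)
    _ ≤ S.card := Finset.card_image_le

theorem injOn_block_of_card_eq {S : Finset (Fin m × Fin n)}
    (hS : IsDominating (kingGraph m n) S) (hcard : S.card = m / 3 * (n / 3)) :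
    Set.InjOn block (S : Set (Fin m × Fin n)) := by
  refine Finset.injOn_of_card_image_eq (le_antisymm Finset.card_image_le ?_)
  calc S.card = (Finset.range (m / 3) ×ˢ Finset.range (n / 3)).card := by simp [hcard]
    _ ≤ (S.image block).card := Finset.card_le_card (range_product_subset_image_block hS)

/-- The block centres; coordinates are 0-based, so the centres are at residue 1, not 2. -/
def centers (m n : ℕ) : Finset (Fin m × Fin n) :=
  Finset.univ.filter (fun v : Fin m × Fin n => (v.1 : ℕ) % 3 = 1 ∧ (v.2 : ℕ) % 3 = 1)

theorem isDominating_centers (h3m : 3 ∣ m) (h3n : 3 ∣ n) :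
    IsDominating (kingGraph m n) (centers m n) := by
  refine isDominating_iff.2 fun v => ⟨(⟨v.1 / 3 * 3 + 1, ?_⟩, ⟨v.2 / 3 * 3 + 1, ?_⟩), ?_, ?_⟩
  · have := v.1.isLt; omega
  · have := v.2.isLt; omega
  · simp [centers, Nat.add_mod]
  · simp only; omega

theorem card_centers (h3m : 3 ∣ m) (h3n : 3 ∣ n) :
    (centers m n).card = m / 3 * (n / 3) := by
  have hinj : Set.InjOn block (centers m n : Set (Fin m × Fin n)) := by
    intro v hv w hw hvw
    simp only [centers, Finset.coe_filter, Finset.mem_univ, true_and, Set.mem_ofPred_eq,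
      block, Prod.ext_iff] at hv hw hvw
    ext <;> omega
  have himage : (centers m n).image block ⊆ Finset.range (m / 3) ×ˢ Finset.range (n / 3) := by
    intro x hx
    obtain ⟨v, -, rfl⟩ := Finset.mem_image.1 hx
    have := v.1.isLt
    have := v.2.isLt
    simp only [block, Finset.mem_product, Finset.mem_range]
    omega
  refine le_antisymm ?_ (card_le_of_isDominating (isDominating_centers h3m h3n))
  calc (centers m n).card = ((centers m n).image block).card :=
        (Finset.card_image_of_injOn hinj).symm
    _ ≤ _ := Finset.card_le_card himage
    _ = m / 3 * (n / 3) := by simp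

theorem fst_mod_three_ne_zero_of_card_eq (h3m : 3 ∣ m) (h3n : 3 ∣ n)
    {S : Finset (Fin m × Fin n)} (hS : IsDominating (kingGraph m n) S)
    (hcard : S.card = m / 3 * (n / 3)) : ∀ s ∈ S, (s.1 : ℕ) % 3 ≠ 0 := by
  by_contra! hex
  obtain ⟨s, hs, hlowest⟩ := (S.filter fun s => (s.1 : ℕ) % 3 = 0).exists_max_image
    (fun s => (s.1 : ℕ)) (by simpa [Finset.filter_nonempty_iff] using hex)
  rw [Finset.mem_filter] at hs
  have := s.1.isLt
  have := s.2.isLt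
  obtain ⟨u, hu, hnear⟩ :=
    isDominating_iff.1 hS (⟨s.1 + 2, by omega⟩, ⟨s.2 / 3 * 3 + 1, by omega⟩)
  dsimp only at hnear
  by_cases hblock : (u.1 : ℕ) ≤ s.1 + 2
  · have hus : u = s := injOn_block_of_card_eq hS hcard hu hs.1
      (Prod.ext (by simp only [block]; omega) (by simp only [block]; omega))
    rw [hus] at hnear
    omega
  · have := hlowest u (Finset.mem_filter.2 ⟨hu, by omega⟩)
    omega

theorem fst_mod_three_eq_one_of_card_eq (h3m : 3 ∣ m) (h3n : 3 ∣ n)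
    {S : Finset (Fin m × Fin n)} (hS : IsDominating (kingGraph m n) S)
    (hcard : S.card = m / 3 * (n / 3)) : ∀ s ∈ S, (s.1 : ℕ) % 3 = 1 := by
  intro s hs
  have hne_zero := fst_mod_three_ne_zero_of_card_eq h3m h3n hS hcard s hs
  have hne_two := fst_mod_three_ne_zero_of_card_eq h3m h3n (hS.map_iso reflectFst)
    (by rw [Finset.card_map, hcard]) _ (Finset.mem_map_of_mem _ hs)
  simp only [reflectFst, Equiv.toEmbedding_apply, Equiv.prodCongr_apply, Prod.map_fst,
    Fin.revPerm_apply, Fin.val_rev] at hne_two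
  have := s.1.isLt
  omega

theorem eq_centers_of_card_eq (h3m : 3 ∣ m) (h3n : 3 ∣ n)
    {S : Finset (Fin m × Fin n)} (hS : IsDominating (kingGraph m n) S)
    (hcard : S.card = m / 3 * (n / 3)) : S = centers m n := by
  refine Finset.eq_of_subset_of_card_le (fun s hs => ?_) (by rw [card_centers h3m h3n, hcard])
  have hsnd := fst_mod_three_eq_one_of_card_eq h3n h3m (hS.map_iso transpose)
    (by rw [Finset.card_map, hcard, mul_comm]) _ (Finset.mem_map_of_mem _ hs)
  simp only [centers, Finset.mem_filter, Finset.mem_univ, true_and]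
  exact ⟨fst_mod_three_eq_one_of_card_eq h3m h3n hS hcard s hs, hsnd⟩

end kingGraph

theorem kingGraph_domination (m n : ℕ)
    (h3m : 3 ∣ m) (h3n : 3 ∣ n) :
    IsDominating (kingGraph m n)
      (Finset.univ.filter
        (fun v : Fin m × Fin n => (v.1 : ℕ) % 3 = 1 ∧ (v.2 : ℕ) % 3 = 1)) ∧
    (Finset.univ.filter
        (fun v : Fin m × Fin n => (v.1 : ℕ) % 3 = 1 ∧ (v.2 : ℕ) % 3 = 1)).card =
      (m / 3) * (n / 3) ∧
    (∀ S : Finset (Fin m × Fin n), IsDominating (kingGraph m n) S →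
      (m / 3) * (n / 3) ≤ S.card) ∧
    (∀ S : Finset (Fin m × Fin n), IsDominating (kingGraph m n) S →
      S.card = (m / 3) * (n / 3) →
      S = Finset.univ.filter
        (fun v : Fin m × Fin n => (v.1 : ℕ) % 3 = 1 ∧ (v.2 : ℕ) % 3 = 1)) :=
  ⟨kingGraph.isDominating_centers h3m h3n, kingGraph.card_centers h3m h3n,
    fun _ => kingGraph.card_le_of_isDominating, fun _ => kingGraph.eq_centers_of_card_eq h3m h3n⟩
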